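/- Fix m, δ, I > 0. Let v = (v_x, v_y, v_φ) : ℝ → ℝ³ and n = (N₁, N₂, M) : ℝ → ℝ³ be differentiable curves satisfying the reduced planar ball bearing equations 𝕀(n(t)) v̇(t) = 𝐦(v(t), n(t)) and ṅ(t) = 𝕁(n(t)) v(t) for all t. Then the functions f₃ = δ M − (N₁² + N₂²) and the energy f₄ = ½ (I + M) v_φ² + ½ (m + δ)(v_x² + v_y²) + v_φ (N₁ v_y − N₂ v_x) are constant in t. -/

import Mathlib

open Matrix


/-- The matrix `𝕀(n)` of the reduced planar ball bearing problem, for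
`n = (N₁, N₂, M)`. -/
noncomputable def planarInertia (m δ I : ℝ) (n : Fin 3 → ℝ) : Matrix (Fin 3) (Fin 3) ℝ :=
  !![m + δ, 0, -n 1; 0, m + δ, n 0; -n 1, n 0, I + n 2]

/-- The matrix `𝕁(n)` of the reduced planar ball bearing problem. -/
noncomputable def planarJ (δ : ℝ) (n : Fin 3 → ℝ) : Matrix (Fin 3) (Fin 3) ℝ :=
  (-(1 / 2 : ℝ)) • !![δ, 0, n 1; 0, δ, -n 0; 2 * n 0, 2 * n 1, 0]

/-- The right-hand side `𝐦(v, n)` of the reduced planar ball bearing problem, for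
`v = (v_x, v_y, v_φ)` and `n = (N₁, N₂, M)`. -/
noncomputable def planarRHS (δ : ℝ) (v n : Fin 3 → ℝ) : Fin 3 → ℝ :=
  (1 / 2 : ℝ) • ![n 0 * v 2 ^ 2 - δ * v 2 * v 1,
    n 1 * v 2 ^ 2 + δ * v 2 * v 0,
    v 2 * (n 0 * v 0 + n 1 * v 1)]

/-!
`f₃` depends on `n` alone, and its derivative along `ṅ = 𝕁(n) v` vanishes identically in `v`.
The energy is the kinetic form `f₄ = ½ ⟨v, 𝕀(n) v⟩`; along `ṅ = 𝕁(n) v` its derivative is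
`⟨v, 𝕀(n) v̇ - 𝐦(v, n)⟩`, which the equations of motion make zero.
-/

noncomputable def planarGeometricIntegral (δ : ℝ) (n : Fin 3 → ℝ) : ℝ :=
  δ * n 2 - (n 0 ^ 2 + n 1 ^ 2)

noncomputable def planarEnergy (m δ I : ℝ) (v n : Fin 3 → ℝ) : ℝ :=
  (1 / 2) * (I + n 2) * v 2 ^ 2 + (1 / 2) * (m + δ) * (v 0 ^ 2 + v 1 ^ 2)
    + v 2 * (n 0 * v 1 - n 1 * v 0)

theorem planarInertia_mulVec (m δ I : ℝ) (n w : Fin 3 → ℝ) :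
    planarInertia m δ I n *ᵥ w =
      ![(m + δ) * w 0 - n 1 * w 2, (m + δ) * w 1 + n 0 * w 2,
        -n 1 * w 0 + n 0 * w 1 + (I + n 2) * w 2] := by
  ext i; fin_cases i <;> simp [planarInertia, mulVec, dotProduct, Fin.sum_univ_three]; ring

theorem planarJ_mulVec (δ : ℝ) (n v : Fin 3 → ℝ) :
    planarJ δ n *ᵥ v =
      ![-(1 / 2) * (δ * v 0 + n 1 * v 2), -(1 / 2) * (δ * v 1 - n 0 * v 2),
        -(n 0 * v 0 + n 1 * v 1)] := by
  ext i; fin_cases i <;> simp [planarJ, mulVec, dotProduct, Fin.sum_univ_three] <;> ring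

section Curves

variable {v n : ℝ → Fin 3 → ℝ} {v' n' : Fin 3 → ℝ} {t : ℝ}

theorem hasDerivAt_planarGeometricIntegral (δ : ℝ) (hn : HasDerivAt n n' t) :
    HasDerivAt (fun t ↦ planarGeometricIntegral δ (n t))
      (δ * n' 2 - 2 * (n t 0 * n' 0 + n t 1 * n' 1)) t := by
  have hn_i (i : Fin 3) := hasDerivAt_pi.mp hn i
  refine (((hn_i 2).const_mul δ).sub (((hn_i 0).pow 2).add ((hn_i 1).pow 2))).congr_deriv ?_
  push_cast
  ring

theorem hasDerivAt_planarEnergy (m δ I : ℝ) (hv : HasDerivAt v v' t)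
    (hn : HasDerivAt n n' t) :
    HasDerivAt (fun t ↦ planarEnergy m δ I (v t) (n t))
      ((1 / 2) * n' 2 * v t 2 ^ 2 + (I + n t 2) * v t 2 * v' 2
        + (m + δ) * (v t 0 * v' 0 + v t 1 * v' 1)
        + v' 2 * (n t 0 * v t 1 - n t 1 * v t 0)
        + v t 2 * (n' 0 * v t 1 + n t 0 * v' 1 - n' 1 * v t 0 - n t 1 * v' 0)) t := by
  have hv_i (i : Fin 3) := hasDerivAt_pi.mp hv i
  have hn_i (i : Fin 3) := hasDerivAt_pi.mp hn i
  refine (((((hn_i 2).const_add I).const_mul (1 / 2 : ℝ)).mul ((hv_i 2).pow 2)).add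
    ((((hv_i 0).pow 2).add ((hv_i 1).pow 2)).const_mul ((1 / 2 : ℝ) * (m + δ))) |>.add
    ((hv_i 2).mul (((hn_i 0).mul (hv_i 1)).sub ((hn_i 1).mul (hv_i 0))))).congr_deriv ?_
  simp only [Pi.pow_apply, Pi.mul_apply, Pi.sub_apply]
  push_cast
  ring

end Curves

theorem planarGeometricIntegral_derivative_along_planarJ (δ : ℝ) (v n : Fin 3 → ℝ) :
    let n' := planarJ δ n *ᵥ v
    δ * n' 2 - 2 * (n 0 * n' 0 + n 1 * n' 1) = 0 := by
  simp only [planarJ_mulVec, cons_val]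
  ring

theorem planarEnergy_derivative_along_planarJ (m δ I : ℝ) (v v' n : Fin 3 → ℝ) :
    let n' := planarJ δ n *ᵥ v
    (1 / 2) * n' 2 * v 2 ^ 2 + (I + n 2) * v 2 * v' 2
        + (m + δ) * (v 0 * v' 0 + v 1 * v' 1)
        + v' 2 * (n 0 * v 1 - n 1 * v 0)
        + v 2 * (n' 0 * v 1 + n 0 * v' 1 - n' 1 * v 0 - n 1 * v' 0) =
      v ⬝ᵥ (planarInertia m δ I n *ᵥ v' - planarRHS δ v n) := by
  simp only [planarJ_mulVec, planarInertia_mulVec, planarRHS, dotProduct, Fin.sum_univ_three,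
    Pi.sub_apply, Pi.smul_apply, smul_eq_mul, cons_val]
  ring

theorem planar_ball_bearing_geometric_and_energy_integrals
    (m δ I : ℝ)
    (v v' n : ℝ → Fin 3 → ℝ)
    (hv : ∀ t : ℝ, HasDerivAt v (v' t) t)
    (heq : ∀ t : ℝ, (planarInertia m δ I (n t)).mulVec (v' t) = planarRHS δ (v t) (n t))
    (hn : ∀ t : ℝ, HasDerivAt n ((planarJ δ (n t)).mulVec (v t)) t) :
    (∀ s t : ℝ, δ * n s 2 - (n s 0 ^ 2 + n s 1 ^ 2) = δ * n t 2 - (n t 0 ^ 2 + n t 1 ^ 2)) ∧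
    (∀ s t : ℝ,
      (1 / 2) * (I + n s 2) * v s 2 ^ 2 + (1 / 2) * (m + δ) * (v s 0 ^ 2 + v s 1 ^ 2)
          + v s 2 * (n s 0 * v s 1 - n s 1 * v s 0) =
        (1 / 2) * (I + n t 2) * v t 2 ^ 2 + (1 / 2) * (m + δ) * (v t 0 ^ 2 + v t 1 ^ 2)
          + v t 2 * (n t 0 * v t 1 - n t 1 * v t 0)) := by
  have hf₃ (t : ℝ) : HasDerivAt (fun t ↦ planarGeometricIntegral δ (n t)) 0 t := by
    convert hasDerivAt_planarGeometricIntegral δ (hn t) using 1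
    exact (planarGeometricIntegral_derivative_along_planarJ δ (v t) (n t)).symm
  have hf₄ (t : ℝ) : HasDerivAt (fun t ↦ planarEnergy m δ I (v t) (n t)) 0 t := by
    convert hasDerivAt_planarEnergy m δ I (hv t) (hn t) using 1
    rw [planarEnergy_derivative_along_planarJ, heq, sub_self, dotProduct_zero]
  exact ⟨is_const_of_deriv_eq_zero (fun t ↦ (hf₃ t).differentiableAt) (fun t ↦ (hf₃ t).deriv),
    is_const_of_deriv_eq_zero (fun t ↦ (hf₄ t).differentiableAt) (fun t ↦ (hf₄ t).deriv)⟩
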